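/- For all positive integers n and r, the number D_{n,r} of r-colored permutations u ∈ 𝔖_n[ℤ_r] having no fixed point of zero color is equal to the number E_{n,r} of r-colored permutations u ∈ 𝔖_n[ℤ_r] for which the largest i ∈ {0,1,…,n} such that the numbers u(1),u(2),…,u(i) are in increasing order and all colored with the zero color is even. -/

import Mathlib

open scoped Classical

noncomputable section

/-! ### Permutation combinatorics -/

/-- The value `w(i)` (1-based, in `{1,…,n}`) of a permutation `w` of `{1,…,n}`,
realized as `Equiv.Perm (Fin n)`. -/
def permApp {n : ℕ} (w : Equiv.Perm (Fin n)) (i : ℕ) : ℕ :=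
  if h : i - 1 < n then (w ⟨i - 1, h⟩ : ℕ) + 1 else 0

/-- The descent set of a permutation, a subset of `{1,…,n-1}`. -/
def descentSet {n : ℕ} (w : Equiv.Perm (Fin n)) : Finset ℕ :=
  (Finset.Icc 1 (n - 1)).filter fun i => permApp w (i + 1) < permApp w i

/-- `numDescentSet m T` is the number of permutations in `𝔖_m` with descent set `T`. -/
def numDescentSet (m : ℕ) (T : Finset ℕ) : ℕ :=
  Nat.card {w : Equiv.Perm (Fin m) // descentSet w = T}

/-- The Coxeter length (number of inversions) of a permutation. -/
def invCount {n : ℕ} (w : Equiv.Perm (Fin n)) : ℕ :=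
  (Finset.univ.filter fun p : Fin n × Fin n => p.1 < p.2 ∧ w p.2 < w p.1).card

/-- For `S = {s_1 < s_2 < ⋯ < s_k} ⊆ {1,…,n-1}`, `sElt n S j = s_j`, with the
conventions `s_0 = 0` and `s_j = n` for `j > k`. -/
def sElt (n : ℕ) (S : Finset ℕ) (j : ℕ) : ℕ :=
  if j = 0 then 0 else if j ≤ S.card then (S.sort (· ≤ ·)).getD (j - 1) 0 else n

lemma sElt_of_gt (n : ℕ) (S : Finset ℕ) (j : ℕ) (h : S.card < j) : sElt n S j = n := by
  unfold sElt
  rw [if_neg (by omega), if_neg (by omega)]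

/-! ### Standard Young tableaux -/

/-- A standard Young tableau of shape `μ`: a filling of the cells of `μ` by the numbers
`1,…,μ.card`, each used once, strictly increasing along rows and columns
(the entry of a non-cell is `0`). -/
structure SYT (μ : YoungDiagram) where
  entry : ℕ → ℕ → ℕ
  entry_eq_zero : ∀ i j, (i, j) ∉ μ → entry i j = 0
  row_strict : ∀ i j1 j2, j1 < j2 → (i, j2) ∈ μ → entry i j1 < entry i j2
  col_strict : ∀ i1 i2 j, i1 < i2 → (i2, j) ∈ μ → entry i1 j < entry i2 j
  bijOn : Set.BijOn (fun p : ℕ × ℕ => entry p.1 p.2) ↑μ.cells ↑(Finset.Icc 1 μ.card)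

/-- The descent set of a standard Young tableau: those `k` such that `k+1` lies in a
strictly lower row than `k`. -/
def SYT.des {μ : YoungDiagram} (Q : SYT μ) : Finset ℕ :=
  (Finset.Icc 1 (μ.card - 1)).filter fun k =>
    ∃ p1 ∈ μ.cells, ∃ p2 ∈ μ.cells,
      Q.entry p1.1 p1.2 = k ∧ Q.entry p2.1 p2.2 = k + 1 ∧ p1.1 < p2.1

/-- `fSYTRow μ t` is the number of standard Young tableaux of shape `μ` whose first row
contains the numbers `1,…,t`. -/
def fSYTRow (μ : YoungDiagram) (t : ℕ) : ℕ :=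
  Nat.card {Q : SYT μ // ∀ k, 1 ≤ k → k ≤ t → ∃ j, (0, j) ∈ μ ∧ Q.entry 0 j = k}

/-! ### Irreducible characters of the symmetric group, via Jacobi–Trudi -/

/-- The number of functions `f : Fin n → Fin k` which are invariant under `g` and whose
fiber over `i` has `c i` elements.  For `c` a composition of `n`, the function
`g ↦ fixedYoungFns n k c g` is the character of the permutation representation of `𝔖_n`
on ordered set partitions of `{1,…,n}` of type `c`, i.e. of the representation induced
from the trivial representation of the corresponding Young subgroup. -/
def fixedYoungFns (n k : ℕ) (c : Fin k → ℤ) (g : Equiv.Perm (Fin n)) : ℕ :=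
  Nat.card {f : Fin n → Fin k //
    (∀ x, f (g x) = f x) ∧ ∀ i, ((Nat.card {x : Fin n // f x = i} : ℕ) : ℤ) = c i}

/-- The irreducible character `χ^μ` of `𝔖_n` associated to a partition `μ` of `n`
(encoded as a Young diagram with `n` cells), defined through the Jacobi–Trudi
determinantal formula `χ^μ = det (h_{μ_i - i + j})`. -/
def chi (n : ℕ) (μ : YoungDiagram) (g : Equiv.Perm (Fin n)) : ℤ :=
  ∑ σ : Equiv.Perm (Fin μ.rowLens.length),
    ((Equiv.Perm.sign σ : ℤˣ) : ℤ) *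
      (fixedYoungFns n μ.rowLens.length
        (fun i => ((μ.rowLen (i : ℕ) : ℕ) : ℤ) - ((i : ℕ) : ℤ) + ((σ i : ℕ) : ℤ)) g : ℤ)

/-! ### Posets, rank selection, maximal chains and characters -/

/-- The maximal chains of the subposet induced on a subset `A` of a poset. -/
def maxChainsIn {P : Type*} [Preorder P] (A : Set P) : Set (Set P) :=
  {C | C ⊆ A ∧ IsChain (· ≤ ·) C ∧
    ∀ D : Set P, D ⊆ A → IsChain (· ≤ ·) D → C ⊆ D → C = D}

/-- The rank-selected subposet `P_S = {x ∈ P : rk x ∈ S} ∪ {⊥, ⊤}`. -/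
def rankSel {P : Type*} [Preorder P] [OrderBot P] [OrderTop P] (rk : P → ℕ)
    (S : Finset ℕ) : Set P :=
  {x | rk x ∈ S} ∪ {⊥, ⊤}

/-- `a_P(S)`: the number of maximal chains of the rank-selected subposet `P_S`. -/
def chainCount {P : Type*} [Preorder P] [OrderBot P] [OrderTop P] (rk : P → ℕ)
    (S : Finset ℕ) : ℕ :=
  Set.ncard (maxChainsIn (rankSel rk S))

/-- `b_P(S) = Σ_{T ⊆ S} (-1)^{|S-T|} a_P(T)`. -/
def bDim {P : Type*} [Preorder P] [OrderBot P] [OrderTop P] (rk : P → ℕ)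
    (S : Finset ℕ) : ℤ :=
  ∑ T ∈ S.powerset, (-1 : ℤ) ^ (S.card - T.card) * (chainCount rk T : ℤ)

/-- The character of the permutation representation `α_P(S)` of a group `G` acting (via
`act`) on the maximal chains of the rank-selected subposet `P_S`: its value at `g` is
the number of maximal chains of `P_S` fixed by `g`. -/
def gAlpha {P G : Type*} [Preorder P] [OrderBot P] [OrderTop P] (rk : P → ℕ)
    (act : G → P → P) (S : Finset ℕ) (g : G) : ℤ :=
  (Set.ncard {C : Set P | C ∈ maxChainsIn (rankSel rk S) ∧ act g '' C = C} : ℤ)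

/-- The character of the virtual representation
`β_P(S) = Σ_{T ⊆ S} (-1)^{|S-T|} α_P(T)`. -/
def gBeta {P G : Type*} [Preorder P] [OrderBot P] [OrderTop P] (rk : P → ℕ)
    (act : G → P → P) (S : Finset ℕ) (g : G) : ℤ :=
  ∑ T ∈ S.powerset, (-1 : ℤ) ^ (S.card - T.card) * gAlpha rk act T g

/-! ### The poset of injective words -/

/-- An injective word over the alphabet `{1,…,n}`. -/
def InjWord (n : ℕ) : Type := {l : List (Fin n) // l.Nodup}

instance (n : ℕ) : PartialOrder (InjWord n) where
  le u v := u.1.Sublist v.1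
  le_refl u := List.Sublist.refl _
  le_trans u v w h1 h2 := List.Sublist.trans h1 h2
  le_antisymm u v h1 h2 := Subtype.ext (List.Sublist.antisymm h1 h2)

instance (n : ℕ) : OrderBot (InjWord n) where
  bot := ⟨[], List.nodup_nil⟩
  bot_le u := List.nil_sublist u.1

/-- The rank function of the poset of injective words (with a maximum adjoined):
the rank of a word is its length, and the rank of `⊤` is `n+1`. -/
def rkInj (n : ℕ) (x : WithTop (InjWord n)) : ℕ :=
  WithTop.recTopCoe (n + 1) (fun u => u.1.length) x

/-- The action of `𝔖_n` on injective words, letter by letter. -/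
def permWord {n : ℕ} (w : Equiv.Perm (Fin n)) (u : InjWord n) : InjWord n :=
  ⟨u.1.map w, u.2.map w.injective⟩

/-- The character of `α_{P_n}(S)` for the `𝔖_n`-action on the poset of injective words. -/
def injAlpha (n : ℕ) (S : Finset ℕ) (g : Equiv.Perm (Fin n)) : ℤ :=
  gAlpha (rkInj n) (fun w : Equiv.Perm (Fin n) => WithTop.map (permWord w)) S g

/-- The character of `β_{P_n}(S)` for the `𝔖_n`-action on the poset of injective words. -/
def injBeta (n : ℕ) (S : Finset ℕ) (g : Equiv.Perm (Fin n)) : ℤ :=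
  gBeta (rkInj n) (fun w : Equiv.Perm (Fin n) => WithTop.map (permWord w)) S g

/-! ### The poset of r-colored injective words -/

/-- An `r`-colored injective word over `{1,…,n}`: a word in the alphabet
`{1,…,n} × ℤ_r` whose letters have pairwise distinct first coordinates. -/
def CInjWord (n r : ℕ) : Type := {l : List (Fin n × ZMod r) // (l.map Prod.fst).Nodup}

instance (n r : ℕ) : PartialOrder (CInjWord n r) where
  le u v := u.1.Sublist v.1
  le_refl u := List.Sublist.refl _
  le_trans u v w h1 h2 := List.Sublist.trans h1 h2
  le_antisymm u v h1 h2 := Subtype.ext (List.Sublist.antisymm h1 h2)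

instance (n r : ℕ) : OrderBot (CInjWord n r) where
  bot := ⟨[], by simp⟩
  bot_le u := List.nil_sublist u.1

/-- The rank function of the poset `P_{n,r}` of `r`-colored injective words
(with a maximum adjoined). -/
def rkC (n r : ℕ) (x : WithTop (CInjWord n r)) : ℕ :=
  WithTop.recTopCoe (n + 1) (fun u => u.1.length) x

/-- The action of `𝔖_n` on `r`-colored injective words: act on the first coordinate
of each letter, leaving colors unchanged. -/
def permCWord {n r : ℕ} (w : Equiv.Perm (Fin n)) (u : CInjWord n r) : CInjWord n r :=
  ⟨u.1.map (fun p => (w p.1, p.2)), by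
    have h := u.2.map w.injective
    rw [List.map_map] at h ⊢
    exact h⟩

/-- The character of `α_{P_{n,r}}(S)`. -/
def cAlpha (n r : ℕ) (S : Finset ℕ) (g : Equiv.Perm (Fin n)) : ℤ :=
  gAlpha (rkC n r) (fun w : Equiv.Perm (Fin n) => WithTop.map (permCWord w)) S g

/-- The character of `β_{P_{n,r}}(S)`. -/
def cBeta (n r : ℕ) (S : Finset ℕ) (g : Equiv.Perm (Fin n)) : ℤ :=
  gBeta (rkC n r) (fun w : Equiv.Perm (Fin n) => WithTop.map (permCWord w)) S g

/-- `b_{P_{n,r}}(S)`, the dimension of `β_{P_{n,r}}(S)`. -/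
def cChainDim (n r : ℕ) (S : Finset ℕ) : ℤ := bDim (rkC n r) S

/-! ### The statistics τ -/

/-- `τ(w,Q)` for a permutation `w` with descent set `S = {s_1 < ⋯ < s_k}` and a standard
Young tableau `Q`: the largest `i ∈ {0,…,k+1}` such that (a) `w(x) = w_S(x)` for
`x > s_{k+1-i}` and (b) no descent of `Q` is smaller than `n - s_{k+1-i}`. -/
def tau (n : ℕ) (S : Finset ℕ) (wS w : Equiv.Perm (Fin n)) {μ : YoungDiagram}
    (Q : SYT μ) : ℕ :=
  ((Finset.range (S.card + 2)).filter
    (fun i => (∀ x, sElt n S (S.card + 1 - i) < x → x ≤ n → permApp w x = permApp wS x) ∧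
      (∀ d ∈ Q.des, n - sElt n S (S.card + 1 - i) ≤ d))).max'
    ⟨0, by
      have hs := sElt_of_gt n S (S.card + 1 - 0) (by omega)
      refine Finset.mem_filter.2 ⟨Finset.mem_range.2 (by omega), ?_, ?_⟩
      · intro x hx hx'
        rw [hs] at hx
        exact absurd hx (not_lt.2 hx')
      · intro d _
        rw [hs]
        omega⟩

/-- The condition that all the numbers `1,…,t` appear in the first row of the `r`-colored
standard Young tableau `(Q, c)` and are colored with the zero color (the color of the
entry `k` being `c (k-1)`). -/
def zeroFirstRow {μ : YoungDiagram} {r : ℕ} (Q : SYT μ) (c : Fin μ.card → ZMod r)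
    (t : ℕ) : Prop :=
  ∀ k : Fin μ.card, (k : ℕ) < t →
    ((∃ j, (0, j) ∈ μ ∧ Q.entry 0 j = (k : ℕ) + 1) ∧ c k = 0)

/-- `τ(w,Q)` for an `r`-colored standard Young tableau `(Q,c)`. -/
def ctau (n : ℕ) {r : ℕ} (S : Finset ℕ) (wS w : Equiv.Perm (Fin n)) {μ : YoungDiagram}
    (Q : SYT μ) (c : Fin μ.card → ZMod r) : ℕ :=
  ((Finset.range (S.card + 2)).filter
    (fun i => (∀ x, sElt n S (S.card + 1 - i) < x → x ≤ n → permApp w x = permApp wS x) ∧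
      zeroFirstRow Q c (n - sElt n S (S.card + 1 - i)))).max'
    ⟨0, by
      have hs := sElt_of_gt n S (S.card + 1 - 0) (by omega)
      refine Finset.mem_filter.2 ⟨Finset.mem_range.2 (by omega), ?_, ?_⟩
      · intro x hx hx'
        rw [hs] at hx
        exact absurd hx (not_lt.2 hx')
      · rw [hs]
        intro k hk
        exact absurd hk (by omega)⟩

/-- The largest `i ∈ {0,…,n}` such that all the numbers `1,…,i` appear in the first row
of the `r`-colored standard Young tableau `(Q,c)` and are colored with the zero color. -/
def mQ (n : ℕ) {r : ℕ} {μ : YoungDiagram} (Q : SYT μ) (c : Fin μ.card → ZMod r) : ℕ :=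
  ((Finset.range (n + 1)).filter (fun i => zeroFirstRow Q c i)).max'
    ⟨0, Finset.mem_filter.2 ⟨Finset.mem_range.2 (by omega),
      fun k hk => absurd hk (by omega)⟩⟩

/-- The condition, for an `r`-colored permutation `(π, c)` (the color of the entry
`π(x)` in one-line notation being `c (x-1)`), that the entries `π(1),…,π(t)` are in
increasing order and all colored with the zero color. -/
def zeroIncreasing {n r : ℕ} (π : Equiv.Perm (Fin n)) (c : Fin n → ZMod r) (t : ℕ) : Prop :=
  (∀ x y, 1 ≤ x → x < y → y ≤ t → permApp π x < permApp π y) ∧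
  ∀ k : Fin n, (k : ℕ) < t → c k = 0

/-- `τ(w,u)` for an `r`-colored permutation `u = (π, c)`. -/
def tauU (n : ℕ) {r : ℕ} (S : Finset ℕ) (wS w : Equiv.Perm (Fin n))
    (π : Equiv.Perm (Fin n)) (c : Fin n → ZMod r) : ℕ :=
  ((Finset.range (S.card + 2)).filter
    (fun i => (∀ x, sElt n S (S.card + 1 - i) < x → x ≤ n → permApp w x = permApp wS x) ∧
      zeroIncreasing π c (n - sElt n S (S.card + 1 - i)))).max'
    ⟨0, by
      have hs := sElt_of_gt n S (S.card + 1 - 0) (by omega)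
      refine Finset.mem_filter.2 ⟨Finset.mem_range.2 (by omega), ?_, ?_, ?_⟩
      · intro x hx hx'
        rw [hs] at hx
        exact absurd hx (not_lt.2 hx')
      · intro x y hx hxy hy
        rw [hs] at hy
        exact absurd hy (by omega)
      · rw [hs]
        intro k hk
        exact absurd hk (by omega)⟩

/-- The largest `i ∈ {0,…,n}` such that the entries `π(1),…,π(i)` of the `r`-colored
permutation `(π,c)` are in increasing order and all colored with the zero color. -/
def mU (n : ℕ) {r : ℕ} (π : Equiv.Perm (Fin n)) (c : Fin n → ZMod r) : ℕ :=
  ((Finset.range (n + 1)).filter (fun i => zeroIncreasing π c i)).max'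
    ⟨0, Finset.mem_filter.2 ⟨Finset.mem_range.2 (by omega),
      fun x y hx hxy hy => absurd hy (by omega),
      fun k hk => absurd hk (by omega)⟩⟩

/-- `a_m(T)`: the number of chains in the Boolean lattice `B_m` whose elements have
set of ranks (cardinalities) equal to `T`. -/
def boolChains (m : ℕ) (T : Finset ℕ) : ℕ :=
  Nat.card {c : Finset (Finset (Fin m)) //
    IsChain (· ⊆ ·) (↑c : Set (Finset (Fin m))) ∧ c.image Finset.card = T}

end

/-!
Both numbers equal `∑_{k=0}^{n} (-1)^k C(n,k) (n-k)! r^(n-k)`.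

For `D_{n,r}` this is inclusion–exclusion: forcing a given set of `k` positions to be fixed
points of zero color leaves `(n-k)! r^(n-k)` colored permutations.

For `E_{n,r}`, the colored permutations whose first `k` entries are increasing and of zero color
are counted by choosing the set of these entries, a permutation of the rest and the remaining
colors, i.e. `C(n,k) (n-k)! r^(n-k)` of them. These conditions are decreasing in `k`, so
`k ≤ m(u)` holds exactly when the first `k` entries of `u` qualify, and summing
`[m(u) even] = ∑_{k ≤ m(u)} (-1)^k` over `u` gives the same alternating sum.
-/

open Finset

section Counting

variable {α : Type*} [Fintype α] [DecidableEq α]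

theorem card_perm_fixing (s : Finset α) :
    #{σ : Equiv.Perm α | ∀ a ∈ s, σ a = a} = (Fintype.card α - #s).factorial := by
  have e : {σ : Equiv.Perm α // ∀ a ∈ s, σ a = a} ≃ Equiv.Perm {a // a ∉ s} :=
    ((Equiv.Perm.subtypeEquivSubtypePerm (· ∉ s)).trans
      (Equiv.subtypeEquivRight fun σ => by simp only [not_not])).symm
  rw [← Fintype.card_subtype, Fintype.card_congr e, Fintype.card_perm,
    Fintype.card_subtype_compl, Fintype.card_coe]

theorem card_perm_extending {ι : Type*} [Fintype ι] (f g : ι ↪ α) :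
    #{σ : Equiv.Perm α | ∀ i, σ (f i) = g i} = (Fintype.card α - Fintype.card ι).factorial := by
  obtain ⟨σ₀, hσ₀⟩ := Equiv.Perm.exists_extending_pair f g f.injective g.injective
  have h : #{σ : Equiv.Perm α | ∀ i, σ (f i) = g i} =
      #{τ : Equiv.Perm α | ∀ i, τ (f i) = f i} := by
    refine card_nbij' (σ₀⁻¹ * ·) (σ₀ * ·) ?_ ?_ (fun _ _ => by group) (fun _ _ => by group) <;>
      intro σ hσ <;> simp only [coe_filter, mem_univ, true_and, Set.mem_ofPred_eq] at hσ ⊢ <;>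
      intro i
    · rw [Equiv.Perm.mul_apply, hσ, ← hσ₀]
      exact σ₀.symm_apply_apply _
    · rw [Equiv.Perm.mul_apply, hσ, hσ₀]
  have hfix : #{τ : Equiv.Perm α | ∀ i, τ (f i) = f i} =
      #{τ : Equiv.Perm α | ∀ a ∈ univ.map f, τ a = a} := by
    simp
  rw [h, hfix, card_perm_fixing, card_map, card_univ]

theorem card_pi_eq_zero_on {R : Type*} [Fintype R] [DecidableEq R] [Zero R] (s : Finset α) :
    #{c : α → R | ∀ a ∈ s, c a = 0} = Fintype.card R ^ (Fintype.card α - #s) := by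
  rw [← Fintype.card_subtype,
    Fintype.card_congr (Equiv.subtypePiEquivPi (p := fun a (b : R) => a ∈ s → b = 0)),
    Fintype.card_pi]
  have h : ∀ a, Fintype.card {b : R // a ∈ s → b = 0} = if a ∈ s then 1 else Fintype.card R := by
    intro a
    split_ifs with ha <;> simp [ha]
  simp only [h, prod_ite, prod_const_one, one_mul, prod_const]
  rw [filter_not, card_univ_sdiff]
  simp

theorem card_colored_derangements {R : Type*} [Fintype R] [DecidableEq R] [Zero R] :
    (Nat.card {u : Equiv.Perm α × (α → R) // ∀ a, ¬(u.1 a = a ∧ u.2 a = 0)} : ℤ) =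
      ∑ k ∈ range (Fintype.card α + 1), (-1) ^ k *
        (((Fintype.card α).choose k * (Fintype.card α - k).factorial *
          Fintype.card R ^ (Fintype.card α - k) : ℕ) : ℤ) := by
  set A : α → Finset (Equiv.Perm α × (α → R)) := fun a => {u | u.1 a = a ∧ u.2 a = 0}
  have hcompl : ({u | ∀ a, ¬(u.1 a = a ∧ u.2 a = 0)} : Finset (Equiv.Perm α × (α → R))) =
      univ.inf fun a => (A a)ᶜ := by
    ext u
    simp [A, mem_inf]
  have hinf : ∀ t : Finset α, #(t.inf A) =
      (Fintype.card α - #t).factorial * Fintype.card R ^ (Fintype.card α - #t) := by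
    intro t
    have hprod : t.inf A = ({σ : Equiv.Perm α | ∀ a ∈ t, σ a = a} : Finset _) ×ˢ
        ({c : α → R | ∀ a ∈ t, c a = 0} : Finset _) := by
      ext u
      simp [A, mem_inf, forall_and]
    rw [hprod, card_product, card_perm_fixing, card_pi_eq_zero_on]
  rw [Nat.card_eq_fintype_card, Fintype.card_subtype, hcompl, inclusion_exclusion_card_inf_compl]
  simp only [hinf]
  rw [sum_powerset_apply_card (f := fun k => (-1 : ℤ) ^ k * ((Fintype.card α - k).factorial *
      Fintype.card R ^ (Fintype.card α - k) : ℕ)), card_univ]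
  refine sum_congr rfl fun k _ => ?_
  push_cast
  ring

end Counting

theorem card_strictMono_fin (i n : ℕ) :
    Fintype.card {f : Fin i → Fin n // StrictMono f} = n.choose i := by
  have e : {f : Fin i → Fin n // StrictMono f} ≃ (Fin i ↪o Fin n) :=
    { toFun f := OrderEmbedding.ofStrictMono f.1 f.2
      invFun e := ⟨e, e.strictMono⟩
      left_inv _ := rfl
      right_inv _ := rfl }
  rw [← Nat.card_eq_fintype_card, Nat.card_congr (e.trans Set.powersetCard.ofFinEmbEquiv),
    Set.powersetCard.card, Nat.card_eq_fintype_card, Fintype.card_fin]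

theorem card_perm_strictMono_comp_castLE {i n : ℕ} (hi : i ≤ n) :
    #{π : Equiv.Perm (Fin n) | StrictMono (π ∘ Fin.castLE hi)} =
      n.choose i * (n - i).factorial := by
  rw [card_eq_sum_card_fiberwise (f := fun π : Equiv.Perm (Fin n) => ⇑π ∘ Fin.castLE hi)
    (t := {f : Fin i → Fin n | StrictMono f}) (fun π hπ => by simpa using hπ)]
  rw [sum_congr rfl fun f hf => ?_, sum_const, smul_eq_mul, ← Fintype.card_subtype,
    card_strictMono_fin]
  have hext := card_perm_extending (Fin.castLEEmb hi) ⟨f, (mem_filter.1 hf).2.injective⟩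
  rw [Fintype.card_fin, Fintype.card_fin] at hext
  rw [← hext]
  congr 1
  ext π
  simp only [mem_filter, mem_univ, true_and, funext_iff, Function.comp_apply]
  refine ⟨fun h => h.2, fun h => ⟨?_, h⟩⟩
  convert (mem_filter.1 hf).2 using 1
  exact funext h

theorem card_filter_even_eq_alternating_sum {ι : Type*} (s : Finset ι) (f : ι → ℕ) {n : ℕ}
    (hf : ∀ x ∈ s, f x ≤ n) :
    (#{x ∈ s | Even (f x)} : ℤ) = ∑ i ∈ range (n + 1), (-1 : ℤ) ^ i * #{x ∈ s | i ≤ f x} := by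
  have key : ∀ x ∈ s, (if Even (f x) then 1 else 0 : ℤ) =
      ∑ i ∈ range (n + 1), if i ≤ f x then (-1) ^ i else 0 := by
    intro x hx
    rw [← sum_filter, show (range (n + 1)).filter (· ≤ f x) = range (f x + 1) by
      ext i; simp only [mem_filter, mem_range]; have := hf x hx; omega, neg_one_geom_sum]
    simp only [Nat.even_add_one, ite_not]
  calc (#{x ∈ s | Even (f x)} : ℤ) = ∑ x ∈ s, if Even (f x) then 1 else 0 := by
        rw [sum_boole]
    _ = ∑ x ∈ s, ∑ i ∈ range (n + 1), if i ≤ f x then (-1) ^ i else 0 := sum_congr rfl key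
    _ = _ := by
      rw [sum_comm]
      refine sum_congr rfl fun i _ => ?_
      rw [← sum_filter, sum_const, nsmul_eq_mul, mul_comm]

theorem le_mU_iff {n r i : ℕ} (hi : i ≤ n) (π : Equiv.Perm (Fin n)) (c : Fin n → ZMod r) :
    i ≤ mU n π c ↔ zeroIncreasing π c i := by
  obtain ⟨-, hmax⟩ := mem_filter.1 (show mU n π c ∈ _ from max'_mem _ _)
  refine ⟨fun h => ?_, fun h => le_max' _ i (mem_filter.2 ⟨mem_range.2 (by omega), h⟩)⟩
  exact ⟨fun x y hx hxy hy => hmax.1 x y hx hxy (hy.trans h),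
    fun k hk => hmax.2 k (hk.trans_le h)⟩

theorem mU_le (n : ℕ) {r : ℕ} (π : Equiv.Perm (Fin n)) (c : Fin n → ZMod r) : mU n π c ≤ n :=
  Nat.lt_succ_iff.1 <| mem_range.1 (mem_filter.1 (max'_mem _ _)).1

theorem permApp_castLE {n i : ℕ} (hi : i ≤ n) (π : Equiv.Perm (Fin n)) (a : Fin i) :
    permApp π (a + 1) = π (Fin.castLE hi a) + 1 := by
  rw [permApp, dif_pos (by omega)]
  rfl

theorem zeroIncreasing_iff {n r i : ℕ} (hi : i ≤ n) (π : Equiv.Perm (Fin n))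
    (c : Fin n → ZMod r) :
    zeroIncreasing π c i ↔
      StrictMono (π ∘ Fin.castLE hi) ∧ ∀ k : Fin n, (k : ℕ) < i → c k = 0 := by
  refine and_congr_left' ⟨fun h a b hab => ?_, fun h x y hx hxy hy => ?_⟩
  · have := h (a + 1) (b + 1) (by omega) (by simpa using hab) (by omega)
    rw [permApp_castLE hi, permApp_castLE hi] at this
    exact Fin.lt_def.2 (by simpa using this)
  · obtain ⟨a, rfl⟩ : ∃ a : Fin i, x = a + 1 := ⟨⟨x - 1, by omega⟩, by simp; omega⟩
    obtain ⟨b, rfl⟩ : ∃ b : Fin i, y = b + 1 := ⟨⟨y - 1, by omega⟩, by simp; omega⟩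
    have := Fin.lt_def.1 (h (show a < b from Fin.lt_def.2 (by omega)))
    rw [permApp_castLE hi, permApp_castLE hi]
    simpa using this

theorem card_zeroIncreasing {n r i : ℕ} [NeZero r] (hi : i ≤ n) :
    #{u : Equiv.Perm (Fin n) × (Fin n → ZMod r) | zeroIncreasing u.1 u.2 i} =
      n.choose i * (n - i).factorial * r ^ (n - i) := by
  have hprod : ({u | zeroIncreasing u.1 u.2 i} : Finset (Equiv.Perm (Fin n) × (Fin n → ZMod r))) =
      ({π : Equiv.Perm (Fin n) | StrictMono (π ∘ Fin.castLE hi)} : Finset _) ×ˢ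
        ({c : Fin n → ZMod r | ∀ k ∈ ({k | (k : ℕ) < i} : Finset (Fin n)), c k = 0} :
          Finset _) := by
    ext u
    simp [zeroIncreasing_iff hi]
  have hc : #{c : Fin n → ZMod r | ∀ k ∈ ({k | (k : ℕ) < i} : Finset (Fin n)), c k = 0} =
      r ^ (n - i) := by
    have h := card_pi_eq_zero_on (R := ZMod r) ({k | (k : ℕ) < i} : Finset (Fin n))
    rw [ZMod.card, Fintype.card_fin, Fin.card_filter_val_lt, min_eq_right hi] at h
    -- the two filters differ only in their `Decidable` instances
    convert h
  rw [hprod, card_product, card_perm_strictMono_comp_castLE, hc]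

theorem statement19_general (n r : ℕ) (hr : 0 < r) :
    Nat.card {u : Equiv.Perm (Fin n) × (Fin n → ZMod r) //
        ∀ i : Fin n, ¬(u.1 i = i ∧ u.2 i = 0)} =
      Nat.card {u : Equiv.Perm (Fin n) × (Fin n → ZMod r) // Even (mU n u.1 u.2)} := by
  have : NeZero r := ⟨hr.ne'⟩
  rw [← Nat.cast_inj (R := ℤ), card_colored_derangements, Nat.card_eq_fintype_card,
    Fintype.card_subtype, card_filter_even_eq_alternating_sum _ _ fun u _ => mU_le n u.1 u.2,
    Fintype.card_fin, ZMod.card]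
  refine sum_congr rfl fun k hk => ?_
  have hk : k ≤ n := Nat.lt_succ_iff.1 (mem_range.1 hk)
  simp only [le_mU_iff hk, card_zeroIncreasing hk]

/-- **D´esarménien-type identity**: `D_{n,r} = E_{n,r}`, i.e. the number of `r`-colored
permutations with no fixed point of zero color equals the number of `r`-colored
permutations `u` for which the largest `i ∈ {0,1,…,n}` such that `u(1),…,u(i)` are in
increasing order and all colored with the zero color is even. -/
theorem statement19 (n r : ℕ) (hn : 0 < n) (hr : 0 < r) :
    Nat.card {u : Equiv.Perm (Fin n) × (Fin n → ZMod r) //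
        ∀ i : Fin n, ¬(u.1 i = i ∧ u.2 i = 0)} =
      Nat.card {u : Equiv.Perm (Fin n) × (Fin n → ZMod r) // Even (mU n u.1 u.2)} :=
  statement19_general n r hr
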